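/- Let S be a nonempty additive commutative semigroup, G a group, and f, f' : S → G polynomial maps of degree ≤ d and ≤ d' respectively. If the subgroup of G generated by f(S) ∪ f'(S) is nilpotent, then the elementwise product f·f' : S → G, t ↦ f(t)·f'(t), is a polynomial map (of some finite degree). -/

import Mathlib

namespace PaperPoly

/-- `DegLE d f` means that `f : S → G` is a polynomial map of degree at most `d ∈ ℕ`:
the base case `DegLE 0 f` means `f` is constant, and `DegLE (d+1) f` means that for every
`s : S` both difference maps `L_s f : t ↦ f (s+t) * (f t)⁻¹` and
`R_s f : t ↦ (f t)⁻¹ * f (s+t)` satisfy `DegLE d`. -/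
def DegLE {S : Type*} [AddCommSemigroup S] {G : Type*} [Group G] : ℕ → (S → G) → Prop
  | 0 => fun f => ∀ t t' : S, f t = f t'
  | d + 1 => fun f => ∀ s : S,
      DegLE d (fun t => f (s + t) * (f t)⁻¹) ∧ DegLE d (fun t => (f t)⁻¹ * f (s + t))

/-- `f` is a polynomial map (of some finite degree). -/
def IsPoly {S : Type*} [AddCommSemigroup S] {G : Type*} [Group G] (f : S → G) : Prop :=
  ∃ d : ℕ, DegLE d f

/-! Leibman's argument. Replace `G` by the nilpotent group `H` generated by the values of `f`
and `f'`, and put `D = max d d' + 1`. The subgroups `N q = γ (q / D)` of the lower central series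
of `H` (with `γ 0 = H`) decrease and satisfy `⁅N i, N j⁆ ≤ N (i + j)`, by the three subgroups
lemma. Call `f` adapted to `N` if its differences of every order `q` take values in `N q`.
Adapted maps are closed under products, and the commutator of maps adapted to `N (j + ·)` and
`N (k + ·)` is adapted to `N (j + k + ·)`: both are proved together by induction on the order
of the differences, from the commutator identities expressing the differences of a product and of
a commutator. Now `f` and `f'` are adapted, because `N q = H` for `q < D` and their differences of
order `≥ D` vanish. Hence so is `f * f'`, and if `γ n = 1` then its differences of order `D * n`
take values in `N (D * n) = 1`. -/

end PaperPoly

open scoped commutatorElement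

namespace Subgroup

variable {G : Type*} [Group G]

theorem commutator_commutator_le_of_rotate {H₁ H₂ H₃ N : Subgroup G} [N.Normal]
    (h1 : ⁅⁅H₂, H₃⁆, H₁⁆ ≤ N) (h2 : ⁅⁅H₃, H₁⁆, H₂⁆ ≤ N) : ⁅⁅H₁, H₂⁆, H₃⁆ ≤ N := by
  rw [← QuotientGroup.ker_mk' N, ← Subgroup.map_eq_bot_iff, map_commutator, map_commutator]
    at h1 h2 ⊢
  exact commutator_commutator_eq_bot_of_rotate h1 h2

theorem commutator_lowerCentralSeries_le (a b : ℕ) :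
    ⁅(⊤ : Subgroup G).lowerCentralSeries a, (⊤ : Subgroup G).lowerCentralSeries b⁆ ≤
      (⊤ : Subgroup G).lowerCentralSeries (a + b + 1) := by
  induction b generalizing a with
  | zero => rfl
  | succ b ih =>
    rw [lowerCentralSeries_succ, commutator_comm]
    apply commutator_commutator_le_of_rotate
    · rw [commutator_comm ⊤, ← lowerCentralSeries_succ]
      exact (ih (a + 1)).trans (lowerCentralSeries_antitone _ (by omega))
    · exact commutator_mono (ih a) le_top

end Subgroup

namespace PaperPoly

section Differences

variable {S : Type*} [AddCommSemigroup S] {G : Type*} [Group G]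

def leftDiff (s : S) (f : S → G) : S → G := fun t => f (s + t) * (f t)⁻¹

def rightDiff (s : S) (f : S → G) : S → G := fun t => (f t)⁻¹ * f (s + t)

theorem degLE_succ_iff {d : ℕ} {f : S → G} :
    DegLE (d + 1) f ↔ ∀ s, DegLE d (leftDiff s f) ∧ DegLE d (rightDiff s f) :=
  Iff.rfl

@[simp]
theorem leftDiff_one (s : S) : leftDiff s (1 : S → G) = 1 := by
  funext t; simp [leftDiff]

@[simp]
theorem rightDiff_one (s : S) : rightDiff s (1 : S → G) = 1 := by
  funext t; simp [rightDiff]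

theorem leftDiff_eq_one {f : S → G} (hf : DegLE 0 f) (s : S) : leftDiff s f = 1 := by
  funext t; simp [leftDiff, hf (s + t) t]

theorem rightDiff_eq_one {f : S → G} (hf : DegLE 0 f) (s : S) : rightDiff s f = 1 := by
  funext t; simp [rightDiff, hf (s + t) t]

theorem leftDiff_inv (s : S) (f : S → G) : leftDiff s f⁻¹ = (rightDiff s f)⁻¹ := by
  funext t; simp [leftDiff, rightDiff]

theorem rightDiff_inv (s : S) (f : S → G) : rightDiff s f⁻¹ = (leftDiff s f)⁻¹ := by
  funext t; simp [leftDiff, rightDiff]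

theorem leftDiff_mul (s : S) (f g : S → G) :
    leftDiff s (f * g) = leftDiff s f * ⁅f, leftDiff s g⁆ * leftDiff s g := by
  funext t; simp only [leftDiff, Pi.mul_apply, Pi.inv_apply, commutatorElement_def]; group

theorem rightDiff_mul (s : S) (f g : S → G) :
    rightDiff s (f * g) = ⁅g⁻¹, rightDiff s f⁆ * rightDiff s f * rightDiff s g := by
  funext t; simp only [rightDiff, Pi.mul_apply, Pi.inv_apply, commutatorElement_def]; group

theorem rightDiff_eq_commutator_mul_leftDiff (s : S) (f : S → G) :
    rightDiff s f = ⁅f⁻¹, leftDiff s f⁆ * leftDiff s f := by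
  funext t; simp only [leftDiff, rightDiff, Pi.mul_apply, Pi.inv_apply, commutatorElement_def]
  group

/-- Write `f (s + ·) = a * f` and `g (s + ·) = b * g`, and expand `⁅a * f, g (s + ·)⁆` and
`⁅f, b * g⁆` by the product rules for commutators. -/
theorem leftDiff_commutator (s : S) (f g : S → G) :
    leftDiff s ⁅f, g⁆ =
      ⁅leftDiff s f, ⁅f, g ∘ (s + ·)⁆⁆ * ⁅f, leftDiff s g⁆ * ⁅leftDiff s g, ⁅f, g⁆⁆ *
        ⁅⁅f, g⁆, ⁅leftDiff s f, g ∘ (s + ·)⁆⁆ * ⁅leftDiff s f, g ∘ (s + ·)⁆ := by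
  funext t
  simp only [leftDiff, Function.comp_apply, Pi.mul_apply, Pi.inv_apply, commutatorElement_def]
  group

theorem degLE_comp_iff {G' : Type*} [Group G'] {φ : G →* G'} (hφ : Function.Injective φ)
    {d : ℕ} {f : S → G} : DegLE d (φ ∘ f) ↔ DegLE d f := by
  induction d generalizing f with
  | zero => exact forall₂_congr fun t t' => hφ.eq_iff
  | succ d ih =>
    have hL (s : S) : leftDiff s (φ ∘ f) = φ ∘ leftDiff s f := by funext t; simp [leftDiff]
    have hR (s : S) : rightDiff s (φ ∘ f) = φ ∘ rightDiff s f := by funext t; simp [rightDiff]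
    simp only [degLE_succ_iff, hL, hR, ih]

end Differences

structure IsFiltration {G : Type*} [Group G] (N : ℕ → Subgroup G) : Prop where
  antitone : Antitone N
  commutator_le (i j : ℕ) : ⁅N i, N j⁆ ≤ N (i + j)

theorem IsFiltration.commutator_mem {G : Type*} [Group G] {N : ℕ → Subgroup G}
    (hN : IsFiltration N) {i j : ℕ} {x y : G} (hx : x ∈ N i) (hy : y ∈ N j) :
    ⁅x, y⁆ ∈ N (i + j) :=
  hN.commutator_le i j (Subgroup.commutator_mem_commutator hx hy)

theorem isFiltration_lowerCentralSeries_div (G : Type*) [Group G] (D : ℕ) :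
    IsFiltration fun q => (⊤ : Subgroup G).lowerCentralSeries (q / D) where
  antitone _ _ hij := Subgroup.lowerCentralSeries_antitone _ (Nat.div_le_div_right hij)
  commutator_le i j := (Subgroup.commutator_lowerCentralSeries_le _ _).trans
    (Subgroup.lowerCentralSeries_antitone _ (Nat.add_div_le_div_add_div_add_one i j D))

section Adapted

variable {S : Type*} [AddCommSemigroup S] {G : Type*} [Group G] {N : ℕ → Subgroup G}

def IsAdapted (N : ℕ → Subgroup G) : ℕ → ℕ → (S → G) → Prop
  | k, 0, f => ∀ t, f t ∈ N k
  | k, m + 1, f => (∀ t, f t ∈ N k) ∧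
      ∀ s, IsAdapted N (k + 1) m (leftDiff s f) ∧ IsAdapted N (k + 1) m (rightDiff s f)

namespace IsAdapted

variable {k m : ℕ} {f g : S → G}

theorem mem (h : IsAdapted N k m f) (t : S) : f t ∈ N k := by
  cases m
  exacts [h t, h.1 t]

theorem left (h : IsAdapted N k (m + 1) f) (s : S) : IsAdapted N (k + 1) m (leftDiff s f) :=
  (h.2 s).1

theorem right (h : IsAdapted N k (m + 1) f) (s : S) : IsAdapted N (k + 1) m (rightDiff s f) :=
  (h.2 s).2

theorem of_succ (h : IsAdapted N k (m + 1) f) : IsAdapted N k m f := by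
  induction m generalizing k f with
  | zero => exact h.1
  | succ m ih => exact ⟨h.1, fun s => ⟨ih (h.left s), ih (h.right s)⟩⟩

theorem mono (hN : Antitone N) {k' : ℕ} (hk : k' ≤ k) (h : IsAdapted N k m f) :
    IsAdapted N k' m f := by
  induction m generalizing k k' f with
  | zero => exact fun t => hN hk (h t)
  | succ m ih =>
    exact ⟨fun t => hN hk (h.mem t),
      fun s => ⟨ih (by omega) (h.left s), ih (by omega) (h.right s)⟩⟩

theorem inv (h : IsAdapted N k m f) : IsAdapted N k m f⁻¹ := by
  induction m generalizing k f with
  | zero => exact fun t => inv_mem (h t)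
  | succ m ih =>
    refine ⟨fun t => inv_mem (h.mem t), fun s => ⟨?_, ?_⟩⟩
    · rw [leftDiff_inv]; exact ih (h.right s)
    · rw [rightDiff_inv]; exact ih (h.left s)

theorem comp_add_left (h : IsAdapted N k m f) (s : S) : IsAdapted N k m (f ∘ (s + ·)) := by
  induction m generalizing k f with
  | zero => exact fun t => h (s + t)
  | succ m ih =>
    have hL (s' : S) : leftDiff s' (f ∘ (s + ·)) = leftDiff s' f ∘ (s + ·) := by
      funext t; simp [leftDiff, add_left_comm]
    have hR (s' : S) : rightDiff s' (f ∘ (s + ·)) = rightDiff s' f ∘ (s + ·) := by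
      funext t; simp [rightDiff, add_left_comm]
    exact ⟨fun t => h.mem (s + t), fun s' => ⟨hL s' ▸ ih (h.left s'), hR s' ▸ ih (h.right s')⟩⟩

theorem mul_succ (hN : IsFiltration N)
    (hmul : ∀ {k} {f g : S → G}, IsAdapted N k m f → IsAdapted N k m g → IsAdapted N k m (f * g))
    (hcomm : ∀ {j k} {f g : S → G},
      IsAdapted N j m f → IsAdapted N k m g → IsAdapted N (j + k) m ⁅f, g⁆)
    (hf : IsAdapted N k (m + 1) f) (hg : IsAdapted N k (m + 1) g) :
    IsAdapted N k (m + 1) (f * g) := by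
  refine ⟨fun t => mul_mem (hf.mem t) (hg.mem t), fun s => ⟨?_, ?_⟩⟩
  · rw [leftDiff_mul]
    exact hmul (hmul (hf.left s) ((hcomm hf.of_succ (hg.left s)).mono hN.antitone (by omega)))
      (hg.left s)
  · rw [rightDiff_mul]
    exact hmul (hmul ((hcomm hg.of_succ.inv (hf.right s)).mono hN.antitone (by omega))
      (hf.right s)) (hg.right s)

theorem commutator_succ (hN : IsFiltration N)
    (hmul : ∀ {k} {f g : S → G}, IsAdapted N k m f → IsAdapted N k m g → IsAdapted N k m (f * g))
    (hcomm : ∀ {j k} {f g : S → G},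
      IsAdapted N j m f → IsAdapted N k m g → IsAdapted N (j + k) m ⁅f, g⁆)
    {j : ℕ} (hf : IsAdapted N j (m + 1) f) (hg : IsAdapted N k (m + 1) g) :
    IsAdapted N (j + k) (m + 1) ⁅f, g⁆ := by
  have up {i : ℕ} {h : S → G} (hi : j + k + 1 ≤ i) (h' : IsAdapted N i m h) :
      IsAdapted N (j + k + 1) m h :=
    h'.mono hN.antitone hi
  refine ⟨fun t => hN.commutator_mem (hf.mem t) (hg.mem t), fun s => ?_⟩
  have hfg := hcomm hf.of_succ hg.of_succ
  have hgs := hg.of_succ.comp_add_left s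
  have hL : IsAdapted N (j + k + 1) m (leftDiff s ⁅f, g⁆) := by
    rw [leftDiff_commutator]
    exact hmul (hmul (hmul (hmul
      (up (by omega) (hcomm (hf.left s) (hcomm hf.of_succ hgs)))
      (up (by omega) (hcomm hf.of_succ (hg.left s))))
      (up (by omega) (hcomm (hg.left s) hfg)))
      (up (by omega) (hcomm hfg (hcomm (hf.left s) hgs))))
      (up (by omega) (hcomm (hf.left s) hgs))
  refine ⟨hL, ?_⟩
  rw [rightDiff_eq_commutator_mul_leftDiff]
  exact hmul (up (by omega) (hcomm hfg.inv hL)) hL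

theorem mul_and_commutator (hN : IsFiltration N) (m : ℕ) :
    (∀ {k} {f g : S → G}, IsAdapted N k m f → IsAdapted N k m g → IsAdapted N k m (f * g)) ∧
      ∀ {j k} {f g : S → G},
        IsAdapted N j m f → IsAdapted N k m g → IsAdapted N (j + k) m ⁅f, g⁆ := by
  induction m with
  | zero =>
    exact ⟨fun hf hg t => mul_mem (hf t) (hg t), fun hf hg t => hN.commutator_mem (hf t) (hg t)⟩
  | succ m ih =>
    exact ⟨mul_succ hN ih.1 ih.2, commutator_succ hN ih.1 ih.2⟩

theorem mul (hN : IsFiltration N) (hf : IsAdapted N k m f) (hg : IsAdapted N k m g) :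
    IsAdapted N k m (f * g) :=
  (mul_and_commutator hN m).1 hf hg

end IsAdapted

theorem isAdapted_one {k m : ℕ} : IsAdapted N k m (1 : S → G) := by
  induction m generalizing k with
  | zero => exact fun _ => one_mem _
  | succ m ih =>
    refine ⟨fun _ => one_mem _, fun s => ?_⟩
    rw [leftDiff_one, rightDiff_one]
    exact ⟨ih, ih⟩

theorem isAdapted_of_degLE {d k m : ℕ} {f : S → G} (hN_top : ∀ q ≤ k + d, N q = ⊤)
    (hf : DegLE d f) : IsAdapted N k m f := by
  induction m generalizing d k f with
  | zero => exact fun t => by simp [hN_top k (by omega)]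
  | succ m ih =>
    refine ⟨fun t => by simp [hN_top k (by omega)], fun s => ?_⟩
    cases d with
    | zero =>
      rw [leftDiff_eq_one hf, rightDiff_eq_one hf]
      exact ⟨isAdapted_one, isAdapted_one⟩
    | succ d =>
      have hN' : ∀ q ≤ k + 1 + d, N q = ⊤ := fun q hq => hN_top q (by omega)
      exact ⟨ih hN' (hf s).1, ih hN' (hf s).2⟩

theorem degLE_of_isAdapted {k m : ℕ} {f : S → G} (hN_bot : N (k + m) = ⊥)
    (h : IsAdapted N k m f) : DegLE m f := by
  induction m generalizing k f with
  | zero =>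
    rw [Nat.add_zero] at hN_bot
    have h1 (t : S) : f t = 1 := by simpa [hN_bot] using h.mem t
    exact fun t t' => by rw [h1 t, h1 t']
  | succ m ih =>
    have hN' : N (k + 1 + m) = ⊥ := by
      rwa [Nat.add_right_comm, Nat.add_assoc]
    exact fun s => ⟨ih hN' (h.left s), ih hN' (h.right s)⟩

end Adapted

theorem product_of_polynomial_maps {S : Type*} [AddCommSemigroup S]
    {G : Type*} [Group G] (f f' : S → G) (d d' : ℕ) (hf : DegLE d f) (hf' : DegLE d' f')
    (hnil : Group.IsNilpotent ↥(Subgroup.closure (Set.range f ∪ Set.range f'))) :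
    IsPoly (fun t => f t * f' t) := by
  set H := Subgroup.closure (Set.range f ∪ Set.range f')
  obtain ⟨n, hn⟩ := Subgroup.nilpotent_iff_lowerCentralSeries.mp hnil
  let g : S → H := fun t => ⟨f t, Subgroup.subset_closure (.inl ⟨t, rfl⟩)⟩
  let g' : S → H := fun t => ⟨f' t, Subgroup.subset_closure (.inr ⟨t, rfl⟩)⟩
  set D := max d d' + 1
  let N : ℕ → Subgroup H := fun q => (⊤ : Subgroup H).lowerCentralSeries (q / D)
  have hN_top (q : ℕ) (hq : q < D) : N q = ⊤ := by simp [N, Nat.div_eq_of_lt hq]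
  have hinj := H.subtype_injective
  have hg : IsAdapted N 0 (D * n) g :=
    isAdapted_of_degLE (fun q hq => hN_top q (by omega)) ((degLE_comp_iff hinj).1 hf)
  have hg' : IsAdapted N 0 (D * n) g' :=
    isAdapted_of_degLE (fun q hq => hN_top q (by omega)) ((degLE_comp_iff hinj).1 hf')
  have hN_bot : N (0 + D * n) = ⊥ := by simp [N, D, hn]
  exact ⟨D * n, (degLE_comp_iff hinj).2
    (degLE_of_isAdapted hN_bot (hg.mul (isFiltration_lowerCentralSeries_div H D) hg'))⟩

end PaperPoly
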